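/- Let A be an abelian category and B a Serre subcategory such that the pair (A, B) satisfies the lifting property. Then for all objects X, Y of A, the natural map from the direct limit of Hom_A(X, Y/Y') (over subobjects Y' ⊂ Y with Y' ∈ B) to Hom_{A/B}(X, Y) is an isomorphism. -/

import Mathlib

open CategoryTheory CategoryTheory.Limits ZeroObject

universe w v u v₂ u₂ v₃ u₃ v₄ u₄

namespace Paper

/-- An object is artinian if every descending chain of subobjects is stationary. -/
def IsArtinianObj {A : Type u} [Category.{v} A] (X : A) : Prop :=
  ∀ f : ℕ → Subobject X, (∀ n, f (n + 1) ≤ f n) → ∃ N, ∀ n, N ≤ n → f n = f N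

/-- An abelian category is artinian if every object is artinian. -/
def IsArtinianCat (A : Type u) [Category.{v} A] : Prop :=
  ∀ X : A, IsArtinianObj X

/-- A Serre subcategory, given as a property of objects: closed under isomorphisms,
subobjects, quotients and extensions, and containing a zero object. -/
structure IsSerreSub {A : Type u} [Category.{v} A] [Abelian A] (P : A → Prop) : Prop where
  zero : P 0
  of_iso : ∀ {X Y : A}, (X ≅ Y) → P X → P Y
  of_mono : ∀ {X Y : A} (f : X ⟶ Y), Mono f → P Y → P X
  of_epi : ∀ {X Y : A} (f : X ⟶ Y), Epi f → P X → P Y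
  of_extension : ∀ (S : ShortComplex A), S.ShortExact → P S.X₁ → P S.X₃ → P S.X₂

/-- The left orthogonal `⊥B` of a class of objects: objects admitting no nonzero
morphism to any object of `B`. -/
def perp {A : Type u} [Category.{v} A] [Abelian A] (P : A → Prop) (X : A) : Prop :=
  ∀ (Y : A), P Y → ∀ f : X ⟶ Y, f = 0

/-- The pair `(A, B)` satisfies the lifting property if every epimorphism onto an object
of `B` admits a restriction to a subobject lying in `B` which is still an epimorphism. -/
def LiftingProperty {A : Type u} [Category.{v} A] [Abelian A] (P : A → Prop) : Prop :=
  ∀ {X Y : A} (f : X ⟶ Y), Epi f → P Y →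
    ∃ (X' : A) (ι : X' ⟶ X), Mono ι ∧ P X' ∧ Epi (ι ≫ f)

/-- The class of morphisms whose kernel and cokernel both lie in `P`; the Gabriel quotient
`A/P` is the localization of `A` at this class of morphisms. -/
def serreW {A : Type u} [Category.{v} A] [Abelian A] (P : A → Prop) : MorphismProperty A :=
  fun _ _ f => P (kernel f) ∧ P (cokernel f)

/-- The homological dimension of an abelian category, as an element of `ℕ∞`:
the smallest `n` such that `Ext^i(X,Y) = 0` for all objects `X`, `Y` and all `i > n`
(and `∞` if there is no such `n`). -/
noncomputable def homDim (A : Type u) [Category.{v} A] [Abelian A] : ℕ∞ :=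
  letI : HasDerivedCategory A := HasDerivedCategory.standard A
  haveI : HasExt.{max u v} A := hasExt_of_hasDerivedCategory A
  sInf {n : ℕ∞ | ∀ (X Y : A) (i : ℕ), n < (i : ℕ∞) → Subsingleton (Abelian.Ext X Y i)}

/-- `n` is an `S`-number: a positive integer all of whose prime factors lie in `S`. -/
def IsSNumber (S : Set ℕ) (n : ℕ) : Prop :=
  0 < n ∧ ∀ p : ℕ, p.Prime → p ∣ n → p ∈ S

/-- An object is `S`-primary torsion if it is killed by some `S`-number. -/
def STorsionObj (S : Set ℕ) {A : Type u} [Category.{v} A] [Preadditive A] (X : A) : Prop :=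
  ∃ n : ℕ, IsSNumber S n ∧ n • (𝟙 X) = 0

/-- The canonical morphism `Y/Y₁ ⟶ Y/Y₂` for subobjects `Y₁ ≤ Y₂` of `Y`. -/
noncomputable def quotMap {A : Type u} [Category.{v} A] [Abelian A] {Y : A}
    {Y₁ Y₂ : Subobject Y} (h : Y₁ ≤ Y₂) :
    cokernel Y₁.arrow ⟶ cokernel Y₂.arrow :=
  cokernel.desc _ (cokernel.π _)
    (by rw [← Subobject.ofLE_arrow h, Category.assoc, cokernel.condition, comp_zero])

end Paper

/-!
The class `serreW B` of isomorphisms modulo `B` admits calculi of left and right fractions.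

Surjectivity: write `g` as a right fraction `Q(s)⁻¹ ≫ Q(f)` with `s : X' ⟶ X` an isomorphism
modulo `B`. The lifting property, applied to `X ⟶ coker s`, gives `X₁ ⊆ X` in `B` such that
`X' ⊞ X₁ ⟶ X` is epi, so we may assume `s` epi. Then `f` descends along `s` to `X ⟶ Y/Y'`,
where `Y' ∈ B` is the image of `ker s` in `Y`.

Injectivity: after passing to a common `Y₀ ⊇ Y₁, Y₂` in `B`, the difference `d : X ⟶ Y/Y₀` of
the two representatives is killed by `Q`, so `im d ∈ B`. The preimage `Y₃ ⊆ Y` of `im d` is an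
extension of `im d` by `Y₀`, hence lies in `B`, and `d` vanishes in `Y/Y₃`.
-/

namespace Paper

open CategoryTheory Limits ObjectProperty

section

variable {A : Type u} [Category.{v} A] [Abelian A]

lemma IsSerreSub.isSerreClass {B : A → Prop} (hB : IsSerreSub B) : IsSerreClass B where
  exists_zero := ⟨0, isZero_zero A, hB.zero⟩
  prop_of_mono f hf hY := hB.of_mono f hf hY
  prop_of_epi f hf hX := hB.of_epi f hf hX
  prop_X₂_of_shortExact hS h₁ h₃ := hB.of_extension _ hS h₁ h₃

lemma π_quotMap {Y : A} {Y₁ Y₂ : Subobject Y} (h : Y₁ ≤ Y₂) :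
    cokernel.π Y₁.arrow ≫ quotMap h = cokernel.π Y₂.arrow :=
  cokernel.π_desc ..

lemma quotMap_comp_quotMap {Y : A} {Y₁ Y₂ Y₃ : Subobject Y} (h₁₂ : Y₁ ≤ Y₂) (h₂₃ : Y₂ ≤ Y₃) :
    quotMap h₁₂ ≫ quotMap h₂₃ = quotMap (h₁₂.trans h₂₃) := by
  rw [← cancel_epi (cokernel.π Y₁.arrow), ← Category.assoc, π_quotMap, π_quotMap, π_quotMap]

instance mono_cokernel_desc_kernelSubobject_arrow {Y Z : A} (φ : Y ⟶ Z) :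
    Mono (cokernel.desc _ φ (kernelSubobject_arrow_comp φ)) := by
  refine ShortComplex.Exact.mono_cokernelDesc
    (S := .mk _ φ (kernelSubobject_arrow_comp φ)) ?_
  rw [ShortComplex.exact_iff_image_eq_kernel]
  exact (imageSubobject_mono _).trans (Subobject.mk_arrow _)

lemma le_kernelSubobject_cokernel_π_comp {Y : A} (Y₀ : Subobject Y) {Z : A}
    (φ : cokernel Y₀.arrow ⟶ Z) : Y₀ ≤ kernelSubobject (cokernel.π Y₀.arrow ≫ φ) :=
  le_kernelSubobject _ _ (by simp)

lemma comp_quotMap_eq_zero {Y : A} {Y₀ : Subobject Y} {Z : A} (φ : cokernel Y₀.arrow ⟶ Z)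
    {X : A} (d : X ⟶ cokernel Y₀.arrow) (hd : d ≫ φ = 0) :
    d ≫ quotMap (le_kernelSubobject_cokernel_π_comp Y₀ φ) = 0 := by
  let m := cokernel.desc _ _ (kernelSubobject_arrow_comp (cokernel.π Y₀.arrow ≫ φ))
  have hm : quotMap (le_kernelSubobject_cokernel_π_comp Y₀ φ) ≫ m = φ := by
    rw [← cancel_epi (cokernel.π Y₀.arrow), ← Category.assoc, π_quotMap, cokernel.π_desc]
  rw [← cancel_mono m, Category.assoc, hm, hd, zero_comp]

lemma exists_epi_biprod_desc {P : ObjectProperty A} (hlift : LiftingProperty P) {X' X : A}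
    (s : X' ⟶ X) (hs : P (cokernel s)) :
    ∃ (X₁ : A) (ι : X₁ ⟶ X), P X₁ ∧ Epi (biprod.desc s ι) := by
  obtain ⟨X₁, ι, -, hX₁, hι⟩ := hlift (cokernel.π s) inferInstance hs
  refine ⟨X₁, ι, hX₁, Preadditive.epi_of_cancel_zero _ fun {Z} u hu ↦ ?_⟩
  have hsu : s ≫ u = 0 := by simpa using biprod.inl ≫= hu
  have hιu : ι ≫ u = 0 := by simpa using biprod.inr ≫= hu
  have hdesc : cokernel.desc s u hsu = 0 :=
    zero_of_epi_comp (ι ≫ cokernel.π s) (by simpa using hιu)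
  rw [← cokernel.π_desc s u hsu, hdesc, comp_zero]

variable (P : ObjectProperty A) [P.IsSerreClass]

lemma prop_kernelSubobject_cokernel_π_comp {Y : A} {Y₀ : Subobject Y} (hY₀ : P Y₀) {Z : A}
    (φ : cokernel Y₀.arrow ⟶ Z) (hφ : P (kernel φ)) :
    P (kernelSubobject (cokernel.π Y₀.arrow ≫ φ)) :=
  P.prop_of_iso (kernelSubobjectIso _).symm
    (P.monoModSerre.comp_mem _ _ (P.prop_of_epi (Abelian.factorThruImage _) hY₀) hφ)

lemma exists_comp_quotMap_eq_zero {Y : A} {Y₀ : Subobject Y} (hY₀ : P Y₀) {X : A}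
    (d : X ⟶ cokernel Y₀.arrow) (hd : P (Abelian.image d)) :
    ∃ (Y₃ : Subobject Y) (h : Y₀ ≤ Y₃), P Y₃ ∧ d ≫ quotMap h = 0 :=
  ⟨_, le_kernelSubobject_cokernel_π_comp Y₀ (cokernel.π d),
    prop_kernelSubobject_cokernel_π_comp P hY₀ _ hd,
    comp_quotMap_eq_zero _ d (cokernel.condition d)⟩

lemma directedOn_subobject_prop (Y : A) : DirectedOn (· ≤ ·) {Y' : Subobject Y | P Y'} := by
  intro Y₁ hY₁ Y₂ hY₂
  let d := biprod.desc Y₁.arrow Y₂.arrow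
  refine ⟨imageSubobject d,
    P.prop_of_epi (factorThruImageSubobject d) (P.prop_biprod hY₁ hY₂), ?_, ?_⟩
  · exact Subobject.le_of_comm (biprod.inl ≫ factorThruImageSubobject d) (by simp [d])
  · exact Subobject.le_of_comm (biprod.inr ≫ factorThruImageSubobject d) (by simp [d])

lemma exists_comp_eq_comp_cokernel_π {X' X Y : A} (s : X' ⟶ X) [Epi s] (hs : P (kernel s))
    (f : X' ⟶ Y) : ∃ (Y' : Subobject Y) (h : X ⟶ cokernel Y'.arrow),
      P Y' ∧ s ≫ h = f ≫ cokernel.π Y'.arrow := by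
  let Y' := imageSubobject (kernel.ι s ≫ f)
  have hf : kernel.ι s ≫ f ≫ cokernel.π Y'.arrow = 0 := by
    rw [← Category.assoc, ← imageSubobject_arrow_comp (kernel.ι s ≫ f), Category.assoc,
      cokernel.condition, comp_zero]
  exact ⟨Y', Abelian.epiDesc s _ hf, P.prop_of_epi (factorThruImageSubobject _) hs,
    Abelian.comp_epiDesc ..⟩

lemma isoModSerre_biprod_inl {X₁ X₂ : A} (h : P X₂) :
    P.isoModSerre (biprod.inl : X₁ ⟶ X₁ ⊞ X₂) :=
  P.isoModSerre_of_mono _ <| P.prop_of_iso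
    ((colimit.isColimit _).coconePointUniqueUpToIso
      (biprod.isCokernelInlCokernelFork X₁ X₂)).symm h

variable {D : Type u₂} [Category.{v₂} D] (L : A ⥤ D) [L.IsLocalization P.isoModSerre]

lemma exists_epi_map_comp_eq_map (hlift : LiftingProperty P) {X Y : A}
    (g : L.obj X ⟶ L.obj Y) : ∃ (X' : A) (s : X' ⟶ X) (f : X' ⟶ Y),
      Epi s ∧ P.isoModSerre s ∧ L.map s ≫ g = L.map f := by
  obtain ⟨φ, rfl⟩ := Localization.exists_rightFraction L P.isoModSerre g
  obtain ⟨X₁, ι, hX₁, hepi⟩ := exists_epi_biprod_desc hlift φ.s φ.hs.2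
  have hinl := isoModSerre_biprod_inl P (X₁ := φ.X') hX₁
  have hs : P.isoModSerre (biprod.desc φ.s ι) :=
    P.isoModSerre.of_precomp _ _ hinl (by rw [biprod.inl_desc]; exact φ.hs)
  refine ⟨_, biprod.desc φ.s ι, biprod.fst ≫ φ.f, hepi, hs, ?_⟩
  have := Localization.inverts L _ _ hinl
  rw [← cancel_epi (L.map biprod.inl), ← L.map_comp_assoc, biprod.inl_desc,
    φ.map_s_comp_map, ← L.map_comp, biprod.inl_fst_assoc]

lemma exists_map_eq_comp_map_cokernel_π (hlift : LiftingProperty P) {X Y : A}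
    (g : L.obj X ⟶ L.obj Y) : ∃ Y' : Subobject Y, P Y' ∧
      ∃ f : X ⟶ cokernel Y'.arrow, L.map f = g ≫ L.map (cokernel.π Y'.arrow) := by
  obtain ⟨X', s, f, _, hs, hsg⟩ := exists_epi_map_comp_eq_map P L hlift g
  obtain ⟨Y', h, hY', hh⟩ := exists_comp_eq_comp_cokernel_π P s hs.1 f
  refine ⟨Y', hY', h, ?_⟩
  have := Localization.inverts L _ s hs
  rw [← cancel_epi (L.map s), ← L.map_comp, hh, L.map_comp, ← hsg, Category.assoc]

lemma exists_comp_quotMap_eq_comp_quotMap [Preadditive D] [L.Additive] {X Y : A}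
    (Y₁ Y₂ : Subobject Y) (hY₁ : P Y₁) (hY₂ : P Y₂)
    (f₁ : X ⟶ cokernel Y₁.arrow) (f₂ : X ⟶ cokernel Y₂.arrow) (g : L.obj X ⟶ L.obj Y)
    (hf₁ : L.map f₁ = g ≫ L.map (cokernel.π Y₁.arrow))
    (hf₂ : L.map f₂ = g ≫ L.map (cokernel.π Y₂.arrow)) :
    ∃ (Y₃ : Subobject Y) (h₁ : Y₁ ≤ Y₃) (h₂ : Y₂ ≤ Y₃), P Y₃ ∧
      f₁ ≫ quotMap h₁ = f₂ ≫ quotMap h₂ := by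
  obtain ⟨Y₀, hY₀, h₁₀, h₂₀⟩ := directedOn_subobject_prop P Y Y₁ hY₁ Y₂ hY₂
  let d := f₁ ≫ quotMap h₁₀ - f₂ ≫ quotMap h₂₀
  have hd : L.map d = 0 := by
    simp only [d, L.map_sub, L.map_comp, hf₁, hf₂, Category.assoc, ← L.map_comp, π_quotMap,
      sub_self]
  obtain ⟨Y₃, h, hY₃, hd₃⟩ := exists_comp_quotMap_eq_zero P hY₀ d
    ((SerreClassLocalization.map_eq_zero_iff L P d).1 hd)
  refine ⟨Y₃, h₁₀.trans h, h₂₀.trans h, hY₃, ?_⟩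
  rw [← quotMap_comp_quotMap h₁₀ h, ← quotMap_comp_quotMap h₂₀ h, ← sub_eq_zero,
    ← Category.assoc, ← Category.assoc, ← Preadditive.sub_comp]
  exact hd₃

end

theorem hom_quotient_of_liftingProperty_general
    (A : Type u) [Category.{v} A] [Abelian A]
    (B : A → Prop) (hB : IsSerreSub B) (hlift : LiftingProperty B)
    (D : Type u₂) [Category.{v₂} D] [Abelian D] (Q : A ⥤ D)
    [Q.IsLocalization (serreW B)]
    [PreservesFiniteLimits Q] :
    ∀ X Y : A,
      (∀ g : Q.obj X ⟶ Q.obj Y, ∃ Y' : Subobject Y, B (Y' : A) ∧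
        ∃ f : X ⟶ cokernel Y'.arrow, Q.map f = g ≫ Q.map (cokernel.π Y'.arrow)) ∧
      (∀ (Y₁ Y₂ : Subobject Y), B (Y₁ : A) → B (Y₂ : A) →
        ∀ (f₁ : X ⟶ cokernel Y₁.arrow) (f₂ : X ⟶ cokernel Y₂.arrow)
          (g : Q.obj X ⟶ Q.obj Y),
          Q.map f₁ = g ≫ Q.map (cokernel.π Y₁.arrow) →
          Q.map f₂ = g ≫ Q.map (cokernel.π Y₂.arrow) →
          ∃ (Y₃ : Subobject Y) (h₁ : Y₁ ≤ Y₃) (h₂ : Y₂ ≤ Y₃), B (Y₃ : A) ∧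
            f₁ ≫ quotMap h₁ = f₂ ≫ quotMap h₂) := by
  have := hB.isSerreClass
  have : Q.IsLocalization (isoModSerre B) := ‹Q.IsLocalization (serreW B)›
  have : Q.Additive := Q.additive_of_preserves_binary_products
  exact fun X Y ↦ ⟨exists_map_eq_comp_map_cokernel_π B Q hlift,
    exists_comp_quotMap_eq_comp_quotMap B Q⟩

/-- **Statement 10.** Let `A` be an abelian category and `B` a Serre subcategory such that
`(A, B)` satisfies the lifting property, and realize the Gabriel quotient `A/B` as an
abelian category `D` with an exact localization functor `Q : A ⥤ D` at the morphisms with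
kernel and cokernel in `B`. Then for all `X, Y` in `A`, the natural map from the direct
limit of `Hom_A(X, Y/Y')` (over subobjects `Y' ⊆ Y` with `Y' ∈ B`) to `Hom_{A/B}(X, Y)` is
an isomorphism: every `g : Q(X) ⟶ Q(Y)` is of the form `Q(f) ≫ Q(π_{Y'})⁻¹` for some such
`Y'` and `f : X ⟶ Y/Y'`, and two representatives with the same image in `Hom_{A/B}(X,Y)`
become equal in some `Hom_A(X, Y/Y'')` with `Y'' ⊇ Y'₁, Y'₂`, `Y'' ∈ B`. -/
theorem hom_quotient_of_liftingProperty
    (A : Type u) [Category.{v} A] [Abelian A]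
    (B : A → Prop) (hB : IsSerreSub B) (hlift : LiftingProperty B)
    (D : Type u₂) [Category.{v₂} D] [Abelian D] (Q : A ⥤ D)
    [Q.IsLocalization (serreW B)]
    [PreservesFiniteLimits Q] [PreservesFiniteColimits Q] :
    ∀ X Y : A,
      (∀ g : Q.obj X ⟶ Q.obj Y, ∃ Y' : Subobject Y, B (Y' : A) ∧
        ∃ f : X ⟶ cokernel Y'.arrow, Q.map f = g ≫ Q.map (cokernel.π Y'.arrow)) ∧
      (∀ (Y₁ Y₂ : Subobject Y), B (Y₁ : A) → B (Y₂ : A) →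
        ∀ (f₁ : X ⟶ cokernel Y₁.arrow) (f₂ : X ⟶ cokernel Y₂.arrow)
          (g : Q.obj X ⟶ Q.obj Y),
          Q.map f₁ = g ≫ Q.map (cokernel.π Y₁.arrow) →
          Q.map f₂ = g ≫ Q.map (cokernel.π Y₂.arrow) →
          ∃ (Y₃ : Subobject Y) (h₁ : Y₁ ≤ Y₃) (h₂ : Y₂ ≤ Y₃), B (Y₃ : A) ∧
            f₁ ≫ quotMap h₁ = f₂ ≫ quotMap h₂) :=
  hom_quotient_of_liftingProperty_general A B hB hlift D Q

end Paper
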